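/- arXiv:1110.0541 — 2 statements merged into one kernel-verified Lean document; each statement's English description precedes it below -/
import Mathlib

section
/- Let A = λ·a^{⊗m} + E where a ∈ R^n is unit length, λ ∈ R, and E is a symmetric m-mode tensor. If (x_p, λ_p) is a principal eigenpair of A (i.e., x_p is unit length, A x_p^{m−1} = λ_p x_p, and |λ_p| is maximal among all eigenvalues), and β(E)/(m−1) bounds |E y^m| for all unit y, then |λ| − β(E)/(m−1) ≤ |λ_p| ≤ |λ| + β(E)/(m−1). -/
/-!
Evaluate `A y^m = λ ⟪a, y⟫^m + E y^m` at two unit vectors. At `y = a` the rank-one part is `λ`,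
and maximality of `|λ_p|` gives the lower bound. At `y = x_p` the left side is `λ_p`, and
`|⟪a, x_p⟫| ≤ 1` (Cauchy–Schwarz) gives the upper bound.
-/

open Finset

/-- scalar contraction `A x^m` of an `m`-mode tensor with a vector. -/
noncomputable def Axm {n m : ℕ} (A : (Fin m → Fin n) → ℝ)
    (x : EuclideanSpace ℝ (Fin n)) : ℝ :=
  ∑ i : Fin m → Fin n, A i * ∏ k : Fin m, x (i k)

/-- vector contraction `A x^{m−1}` of an `(s+2)`-mode tensor. -/
noncomputable def Axm1 {n s : ℕ} (A : (Fin (s + 2) → Fin n) → ℝ)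
    (x : EuclideanSpace ℝ (Fin n)) : EuclideanSpace ℝ (Fin n) :=
  WithLp.toLp 2 (fun t => ∑ j : Fin (s + 1) → Fin n, A (Fin.cons t j) * ∏ k : Fin (s + 1), x (j k))

open RealInnerProductSpace

section Contraction

variable {n m s : ℕ}

lemma Axm_add (A B : (Fin m → Fin n) → ℝ) (x : EuclideanSpace ℝ (Fin n)) :
    Axm (fun i => A i + B i) x = Axm A x + Axm B x := by
  simp only [Axm, add_mul, sum_add_distrib]

lemma Axm_rankOne (lam : ℝ) (a x : EuclideanSpace ℝ (Fin n)) :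
    Axm (fun i => lam * ∏ k : Fin m, a (i k)) x = lam * ⟪a, x⟫ ^ m := by
  simp only [Axm, PiLp.inner_apply, RCLike.inner_apply, conj_trivial, Fintype.sum_pow, mul_sum,
    mul_assoc, ← prod_mul_distrib, mul_comm (x _)]

lemma Axm_eq_inner_Axm1 (A : (Fin (s + 2) → Fin n) → ℝ) (x : EuclideanSpace ℝ (Fin n)) :
    Axm A x = ⟪x, Axm1 A x⟫ := by
  rw [Axm, ← (Fin.consEquiv fun _ : Fin (s + 2) => Fin n).sum_comp, Fintype.sum_prod_type]
  simp only [PiLp.inner_apply, RCLike.inner_apply, conj_trivial, Axm1, sum_mul, Fin.consEquiv,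
    Equiv.coe_fn_mk]
  exact sum_congr rfl fun t _ => sum_congr rfl fun j _ => by
    simp only [Fin.prod_univ_succ, Fin.cons_zero, Fin.cons_succ]; ring

lemma Axm_eq_of_Axm1_eq_smul {A : (Fin (s + 2) → Fin n) → ℝ} {x : EuclideanSpace ℝ (Fin n)}
    {μ : ℝ} (hx : ‖x‖ = 1) (heig : Axm1 A x = μ • x) : Axm A x = μ := by
  rw [Axm_eq_inner_Axm1, heig, inner_smul_right, real_inner_self_eq_norm_sq, hx, one_pow, mul_one]

end Contraction

lemma abs_mul_inner_pow_le {F : Type*} [NormedAddCommGroup F] [InnerProductSpace ℝ F] (lam : ℝ)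
    {a x : F} (ha : ‖a‖ = 1) (hx : ‖x‖ = 1) (m : ℕ) : |lam * ⟪a, x⟫ ^ m| ≤ |lam| := by
  have hax : |⟪a, x⟫| ≤ 1 := by simpa [ha, hx] using abs_real_inner_le_norm a x
  rw [abs_mul, abs_pow]
  exact mul_le_of_le_one_right (abs_nonneg lam) (pow_le_one₀ (abs_nonneg _) hax)

/-- for `A = λ·a^{⊗m} + E` (`m = s+2`, `a` unit), a principal eigenpair
`(x_p, λ_p)` satisfies `|λ| − β(E)/(m−1) ≤ |λ_p| ≤ |λ| + β(E)/(m−1)`. -/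
theorem principal_eigenvalue_bounds {n s : ℕ} (a : EuclideanSpace ℝ (Fin n))
    (ha : ‖a‖ = 1) (lam betaE : ℝ) (E : (Fin (s + 2) → Fin n) → ℝ)
    (A : (Fin (s + 2) → Fin n) → ℝ)
    (hA : A = fun i => lam * (∏ k : Fin (s + 2), a (i k)) + E i)
    (hE : ∀ y : EuclideanSpace ℝ (Fin n), ‖y‖ = 1 →
      |Axm E y| ≤ betaE / (s + 1))
    (xp : EuclideanSpace ℝ (Fin n)) (lamp : ℝ) (hxp : ‖xp‖ = 1)
    (heig : Axm1 A xp = lamp • xp)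
    (hprin : ∀ y : EuclideanSpace ℝ (Fin n), ‖y‖ = 1 → |Axm A y| ≤ |lamp|) :
    |lam| - betaE / (s + 1) ≤ |lamp| ∧ |lamp| ≤ |lam| + betaE / (s + 1) := by
  have hsplit (y : EuclideanSpace ℝ (Fin n)) :
      Axm A y = lam * ⟪a, y⟫ ^ (s + 2) + Axm E y := by
    rw [hA, Axm_add, Axm_rankOne]
  constructor
  · have hAa : Axm A a = lam + Axm E a := by
      rw [hsplit, real_inner_self_eq_norm_sq, ha, one_pow, one_pow, mul_one]
    rw [sub_le_iff_le_add]
    calc |lam| = |Axm A a - Axm E a| := by rw [hAa, add_sub_cancel_right]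
      _ ≤ |Axm A a| + |Axm E a| := abs_sub _ _
      _ ≤ |lamp| + betaE / (s + 1) := add_le_add (hprin a ha) (hE a ha)
  · calc |lamp| = |lam * ⟪a, xp⟫ ^ (s + 2) + Axm E xp| := by
          rw [← hsplit, Axm_eq_of_Axm1_eq_smul hxp heig]
      _ ≤ |lam * ⟪a, xp⟫ ^ (s + 2)| + |Axm E xp| := abs_add_le _ _
      _ ≤ |lam| + betaE / (s + 1) :=
          add_le_add (abs_mul_inner_pow_le lam ha hxp (s + 2)) (hE xp hxp)
end

section
/- Let A = λ·a^{⊗m} + E be an m-mode symmetric tensor with ‖a‖=1, λ > 0, and suppose |y^T (E x^{m−2}) y| ≤ β(E)/(m−1) for all unit vectors x, y. Let (x_p, λ_p) be a negative-stable eigenpair of A with λ_p + α > 0, and let θ be the angle between x_p and a. If α > (−λ_p + (m−1)λ|sin θ cos^{m−2} θ| + β(E))/2, then for every unit vector y ⊥ x_p, −1 < ((m−1) y^T(A x_p^{m−2})y + α)/(λ_p + α). -/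
open Finset

/-- matrix contraction `A x^{m−2}` for `m = s+2`. -/
noncomputable def Axm2 {n s : ℕ} (A : (Fin (s + 2) → Fin n) → ℝ)
    (x : EuclideanSpace ℝ (Fin n)) : Matrix (Fin n) (Fin n) ℝ :=
  fun t u => ∑ j : Fin s → Fin n,
    A (Fin.cons t (Fin.cons u j)) * ∏ k : Fin s, x (j k)

/-- quadratic form `y^T M y`. -/
noncomputable def quadForm {n : ℕ} (M : Matrix (Fin n) (Fin n) ℝ)
    (y : EuclideanSpace ℝ (Fin n)) : ℝ :=
  ∑ t : Fin n, ∑ u : Fin n, y t * M t u * y u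

/-! `A x^{m−2}` splits as `λ ⟨a, x⟩^{m−2} a aᵀ + E x^{m−2}`. For a unit `y ⊥ x_p`, Cauchy–Schwarz
against the component of `a` orthogonal to `x_p` gives `⟨a, y⟩² ≤ 1 − cos² θ`, hence
`⟨a, y⟩² ≤ |⟨a, y⟩| ≤ sin θ`. So `(m−1) yᵀ(A x_p^{m−2}) y ≥ −(m−1) λ |sin θ cos^{m−2} θ| − β(E)`,
which exceeds `−λ_p − 2α` by the choice of `α`. -/

open Matrix RealInnerProductSpace

section Contraction

variable {n s : ℕ}

lemma Axm2_add (A B : (Fin (s + 2) → Fin n) → ℝ) (x : EuclideanSpace ℝ (Fin n)) :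
    Axm2 (A + B) x = Axm2 A x + Axm2 B x := by
  ext t u
  simp only [Axm2, Pi.add_apply, Matrix.add_apply, add_mul, sum_add_distrib]

lemma Axm2_smul (c : ℝ) (A : (Fin (s + 2) → Fin n) → ℝ) (x : EuclideanSpace ℝ (Fin n)) :
    Axm2 (c • A) x = c • Axm2 A x := by
  ext t u
  simp only [Axm2, Pi.smul_apply, Matrix.smul_apply, smul_eq_mul, mul_assoc, mul_sum]

lemma Axm2_rankOne (a x : EuclideanSpace ℝ (Fin n)) :
    Axm2 (fun i : Fin (s + 2) → Fin n => ∏ k, a (i k)) x = ⟪a, x⟫ ^ s • vecMulVec a a := by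
  ext t u
  simp only [Axm2, Fin.prod_univ_succ, Fin.cons_zero, Fin.cons_succ, Matrix.smul_apply,
    vecMulVec_apply, smul_eq_mul, PiLp.inner_apply, RCLike.inner_apply, conj_trivial,
    Fintype.sum_pow, sum_mul]
  refine sum_congr rfl fun j _ => ?_
  rw [prod_mul_distrib]
  ring

lemma quadForm_add (M N : Matrix (Fin n) (Fin n) ℝ) (y : EuclideanSpace ℝ (Fin n)) :
    quadForm (M + N) y = quadForm M y + quadForm N y := by
  simp only [quadForm, Matrix.add_apply, mul_add, add_mul, sum_add_distrib]

lemma quadForm_smul (c : ℝ) (M : Matrix (Fin n) (Fin n) ℝ) (y : EuclideanSpace ℝ (Fin n)) :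
    quadForm (c • M) y = c * quadForm M y := by
  simp only [quadForm, Matrix.smul_apply, smul_eq_mul, mul_sum]
  refine sum_congr rfl fun t _ => sum_congr rfl fun u _ => ?_
  ring

lemma quadForm_vecMulVec_self (a y : EuclideanSpace ℝ (Fin n)) :
    quadForm (vecMulVec a a) y = ⟪a, y⟫ ^ 2 := by
  simp only [quadForm, vecMulVec_apply, PiLp.inner_apply, RCLike.inner_apply, conj_trivial, sq,
    sum_mul_sum]
  refine sum_congr rfl fun t _ => sum_congr rfl fun u _ => ?_
  ring

lemma quadForm_Axm2_rankOne_add (lam : ℝ) (a x y : EuclideanSpace ℝ (Fin n))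
    (E : (Fin (s + 2) → Fin n) → ℝ) :
    quadForm (Axm2 (fun i => lam * (∏ k : Fin (s + 2), a (i k)) + E i) x) y =
      lam * ⟪a, x⟫ ^ s * ⟪a, y⟫ ^ 2 + quadForm (Axm2 E x) y := by
  change quadForm (Axm2 (lam • (fun i : Fin (s + 2) → Fin n => ∏ k, a (i k)) + E) x) y = _
  rw [Axm2_add, Axm2_smul, Axm2_rankOne, smul_smul, quadForm_add, quadForm_smul,
    quadForm_vecMulVec_self]

end Contraction

lemma inner_sq_le_one_sub_inner_sq {F : Type*} [NormedAddCommGroup F] [InnerProductSpace ℝ F]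
    {a x y : F} (ha : ‖a‖ = 1) (hx : ‖x‖ = 1) (hy : ‖y‖ = 1) (hyx : ⟪y, x⟫ = 0) :
    ⟪a, y⟫ ^ 2 ≤ 1 - ⟪a, x⟫ ^ 2 := by
  have hproj : ⟪y, a - ⟪a, x⟫ • x⟫ = ⟪a, y⟫ := by
    rw [inner_sub_right, real_inner_smul_right, hyx, real_inner_comm]; ring
  have hnorm : ⟪a - ⟪a, x⟫ • x, a - ⟪a, x⟫ • x⟫ = 1 - ⟪a, x⟫ ^ 2 := by
    rw [real_inner_self_eq_norm_sq, norm_sub_sq_real, real_inner_smul_right, norm_smul, ha, hx,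
      Real.norm_eq_abs, mul_one, sq_abs]
    ring
  have := real_inner_mul_inner_self_le y (a - ⟪a, x⟫ • x)
  rw [hproj, hnorm, real_inner_self_eq_norm_sq, hy] at this
  nlinarith

lemma sq_le_sin_arccos {c d : ℝ} (h : d ^ 2 ≤ 1 - c ^ 2) : d ^ 2 ≤ Real.sin (Real.arccos c) := by
  have hd : |d| ≤ 1 := (sq_le_one_iff_abs_le_one d).mp (by nlinarith)
  calc d ^ 2 = |d| * |d| := by rw [abs_mul_abs_self, sq]
    _ ≤ |d| := mul_le_of_le_one_right (abs_nonneg d) hd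
    _ ≤ Real.sin (Real.arccos c) := by rw [Real.sin_arccos]; exact Real.abs_le_sqrt h

lemma neg_abs_sin_arccos_mul_pow_le {c d : ℝ} (s : ℕ) (h : d ^ 2 ≤ 1 - c ^ 2) :
    -|Real.sin (Real.arccos c) * c ^ s| ≤ c ^ s * d ^ 2 := by
  have hsin : 0 ≤ Real.sin (Real.arccos c) := by rw [Real.sin_arccos]; exact Real.sqrt_nonneg _
  calc -|Real.sin (Real.arccos c) * c ^ s| ≤ -(d ^ 2 * |c ^ s|) := by
        rw [abs_mul, abs_of_nonneg hsin]
        exact neg_le_neg (mul_le_mul_of_nonneg_right (sq_le_sin_arccos h) (abs_nonneg _))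
    _ = -|c ^ s * d ^ 2| := by rw [abs_mul, abs_of_nonneg (sq_nonneg d), mul_comm]
    _ ≤ c ^ s * d ^ 2 := neg_abs_le _

theorem sshopm_stability_general {n s : ℕ} (a : EuclideanSpace ℝ (Fin n)) (ha : ‖a‖ = 1)
    (lam betaE alpha : ℝ) (hlam : 0 < lam)
    (E A : (Fin (s + 2) → Fin n) → ℝ)
    (hA : A = fun i => lam * (∏ k : Fin (s + 2), a (i k)) + E i)
    (hE : ∀ x y : EuclideanSpace ℝ (Fin n), ‖x‖ = 1 → ‖y‖ = 1 →
      |quadForm (Axm2 E x) y| ≤ betaE / (s + 1))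
    (xp : EuclideanSpace ℝ (Fin n)) (lamp : ℝ) (hxp : ‖xp‖ = 1)
    (hpos : 0 < lamp + alpha)
    (halpha : alpha > (-lamp + (s + 1) * lam *
      |Real.sin (Real.arccos (inner a xp (𝕜 := ℝ))) *
        (inner a xp (𝕜 := ℝ)) ^ s| + betaE) / 2) :
    ∀ y : EuclideanSpace ℝ (Fin n), ‖y‖ = 1 → inner y xp (𝕜 := ℝ) = 0 →
      -1 < ((s + 1) * quadForm (Axm2 A xp) y + alpha) / (lamp + alpha) := by
  intro y hy hyx
  have hs : (0 : ℝ) < s + 1 := by positivity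
  have hrank : -|Real.sin (Real.arccos ⟪a, xp⟫) * ⟪a, xp⟫ ^ s| ≤ ⟪a, xp⟫ ^ s * ⟪a, y⟫ ^ 2 :=
    neg_abs_sin_arccos_mul_pow_le s (inner_sq_le_one_sub_inner_sq ha hxp hy hyx)
  have herr : -betaE ≤ (s + 1) * quadForm (Axm2 E xp) y := by
    have := (abs_le.mp (hE xp y hxp hy)).1
    rwa [← neg_div, div_le_iff₀' hs] at this
  rw [hA, quadForm_Axm2_rankOne_add, lt_div_iff₀ hpos]
  linarith [mul_le_mul_of_nonneg_left hrank (mul_pos hs hlam).le]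

/-- stability of a (negative-stable) eigenpair of
`A = λ·a^{⊗m} + E` under SS-HOPM, for a sufficiently large shift `α`
(here `m = s+2`, so `m−1 = s+1` and `m−2 = s`). -/
theorem sshopm_stability {n s : ℕ} (a : EuclideanSpace ℝ (Fin n)) (ha : ‖a‖ = 1)
    (lam betaE alpha : ℝ) (hlam : 0 < lam)
    (E A : (Fin (s + 2) → Fin n) → ℝ)
    (hA : A = fun i => lam * (∏ k : Fin (s + 2), a (i k)) + E i)
    (hE : ∀ x y : EuclideanSpace ℝ (Fin n), ‖x‖ = 1 → ‖y‖ = 1 →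
      |quadForm (Axm2 E x) y| ≤ betaE / (s + 1))
    (xp : EuclideanSpace ℝ (Fin n)) (lamp : ℝ) (hxp : ‖xp‖ = 1)
    (heig : Axm1 A xp = lamp • xp)
    (hpos : 0 < lamp + alpha)
    (halpha : alpha > (-lamp + (s + 1) * lam *
      |Real.sin (Real.arccos (inner a xp (𝕜 := ℝ))) *
        (inner a xp (𝕜 := ℝ)) ^ s| + betaE) / 2) :
    ∀ y : EuclideanSpace ℝ (Fin n), ‖y‖ = 1 → inner y xp (𝕜 := ℝ) = 0 →
      -1 < ((s + 1) * quadForm (Axm2 A xp) y + alpha) / (lamp + alpha) :=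
  sshopm_stability_general a ha lam betaE alpha hlam E A hA hE xp lamp hxp hpos halpha
end
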